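/- The network formation Markov chain just described, with all meeting probabilities ρ(g_{-ij}) > 0 and logistic link-update probabilities (which are strictly in (0,1)), is irreducible and aperiodic on the finite state space G, and hence converges to its unique stationary distribution π(g) = exp[Q(g)]/Σ_ω exp[Q(ω)] from any initial network. -/

import Mathlib

open Finset Filter

/-- Undirected simple networks on `n` nodes: symmetric Boolean matrices with zero diagonal. -/
abbrev Net (n : ℕ) := {g : Fin n → Fin n → Bool // (∀ i j, g i j = g j i) ∧ ∀ i, g i i = false}

/-- Pairs of nodes `i < j`. -/
abbrev NPair (n : ℕ) := {p : Fin n × Fin n // p.1 < p.2}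

/-- The network `g` with the link `{i,j}` set to `d` (diagonal kept at `false`). -/
def setLink {n : ℕ} (g : Net n) (i j : Fin n) (d : Bool) : Net n :=
  ⟨fun a b => if a = b then false
      else if (a = i ∧ b = j) ∨ (a = j ∧ b = i) then d else g.1 a b, by
    constructor
    · intro a b
      by_cases hab : a = b
      · simp [hab]
      · have hba : ¬ b = a := fun h => hab h.symm
        simp only [if_neg hab, if_neg hba]
        by_cases h : (a = i ∧ b = j) ∨ (a = j ∧ b = i)
        · rw [if_pos h, if_pos (by tauto)]
        · rw [if_neg h, if_neg (by tauto), g.2.1 a b]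
    · intro a
      simp⟩

/-- The logistic function `Λ(u) = e^u / (1 + e^u)`. -/
noncomputable def Lgc (u : ℝ) : ℝ := Real.exp u / (1 + Real.exp u)

/-! ### Auxiliary general Markov chain lemmas -/

set_option linter.unusedSectionVars false

section markov

variable {S : Type*} [Fintype S] [DecidableEq S] [Nonempty S]

lemma row_sum_pow_aux (M : Matrix S S ℝ) (h : ∀ x, ∑ y, M x y = 1) (m : ℕ) (x : S) :
    ∑ y, (M ^ m) x y = 1 := by
  induction m generalizing x with
  | zero => simp [Matrix.one_apply]
  | succ m ih =>
    rw [pow_succ]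
    simp only [Matrix.mul_apply]
    rw [Finset.sum_comm]
    have : ∀ z, ∑ y, (M ^ m) x z * M z y = (M ^ m) x z := by
      intro z; rw [← Finset.mul_sum, h z, mul_one]
    rw [Finset.sum_congr rfl fun z _ => this z]
    exact ih x

lemma pow_nonneg_aux (M : Matrix S S ℝ) (hnn : ∀ a b, 0 ≤ M a b) (m : ℕ) (a b : S) :
    0 ≤ (M ^ m) a b := by
  induction m generalizing a b with
  | zero =>
    rw [pow_zero, Matrix.one_apply]
    split <;> norm_num
  | succ m ih =>
    rw [pow_succ, Matrix.mul_apply]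
    exact Finset.sum_nonneg fun z _ => mul_nonneg (ih a z) (hnn z b)

lemma step_pos_aux (M : Matrix S S ℝ) (hnn : ∀ a b, 0 ≤ M a b) (m : ℕ) (a b c : S)
    (h1 : 0 < M a b) (h2 : 0 < (M ^ m) b c) : 0 < (M ^ (m + 1)) a c := by
  rw [pow_succ', Matrix.mul_apply]
  refine Finset.sum_pos' (fun z _ => mul_nonneg (hnn a z) (pow_nonneg_aux M hnn m z c)) ?_
  exact ⟨b, Finset.mem_univ b, mul_pos h1 h2⟩

lemma contract_aux (M : Matrix S S ℝ) (hnn : ∀ a b, 0 ≤ M a b) (hrow : ∀ a, ∑ b, M a b = 1)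
    (e : S → ℝ) : ∑ y, |∑ x, e x * M x y| ≤ ∑ x, |e x| := by
  calc ∑ y, |∑ x, e x * M x y| ≤ ∑ y, ∑ x, |e x| * M x y := by
        refine Finset.sum_le_sum fun y _ => ?_
        refine (Finset.abs_sum_le_sum_abs _ _).trans ?_
        refine Finset.sum_le_sum fun x _ => ?_
        rw [abs_mul, abs_of_nonneg (hnn x y)]
    _ = ∑ x, |e x| := by
        rw [Finset.sum_comm]
        refine Finset.sum_congr rfl fun x _ => ?_
        rw [← Finset.mul_sum, hrow x, mul_one]

lemma contract'_aux (M : Matrix S S ℝ) (hrow : ∀ a, ∑ b, M a b = 1)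
    (δ : ℝ) (hδ : ∀ a b, δ ≤ M a b) (e : S → ℝ) (he : ∑ x, e x = 0) :
    ∑ y, |∑ x, e x * M x y| ≤ (1 - (Fintype.card S : ℝ) * δ) * ∑ x, |e x| := by
  have key : ∀ y, ∑ x, e x * M x y = ∑ x, e x * (M x y - δ) := by
    intro y
    simp only [mul_sub]
    rw [Finset.sum_sub_distrib, ← Finset.sum_mul, he, zero_mul, sub_zero]
  calc ∑ y, |∑ x, e x * M x y| ≤ ∑ y, ∑ x, |e x| * (M x y - δ) := by
        refine Finset.sum_le_sum fun y _ => ?_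
        rw [key y]
        refine (Finset.abs_sum_le_sum_abs _ _).trans ?_
        refine Finset.sum_le_sum fun x _ => ?_
        rw [abs_mul, abs_of_nonneg (sub_nonneg.mpr (hδ x y))]
    _ = ∑ x, |e x| * (1 - (Fintype.card S : ℝ) * δ) := by
        rw [Finset.sum_comm]
        refine Finset.sum_congr rfl fun x _ => ?_
        rw [← Finset.mul_sum, Finset.sum_sub_distrib, hrow x, Finset.sum_const,
          Finset.card_univ, nsmul_eq_mul]
    _ = (1 - (Fintype.card S : ℝ) * δ) * ∑ x, |e x| := by
        rw [← Finset.sum_mul, mul_comm]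

lemma stat_pow_aux (M : Matrix S S ℝ) (f : S → ℝ) (hf : ∀ y, ∑ x, f x * M x y = f y)
    (m : ℕ) (y : S) : ∑ x, f x * (M ^ m) x y = f y := by
  induction m generalizing y with
  | zero => simp [Matrix.one_apply]
  | succ m ih =>
    rw [pow_succ]
    simp only [Matrix.mul_apply, Finset.mul_sum]
    rw [Finset.sum_comm]
    have h1 : ∀ z, ∑ x, f x * ((M ^ m) x z * M z y) = f z * M z y := by
      intro z
      simp only [← mul_assoc]
      rw [← Finset.sum_mul, ih z]
    rw [Finset.sum_congr rfl fun z _ => h1 z]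
    exact hf y

lemma markov_unique_aux (M : Matrix S S ℝ) (hrow : ∀ a, ∑ b, M a b = 1)
    (N : ℕ) (δ : ℝ) (hδ : 0 < δ) (hMN : ∀ a b, δ ≤ (M ^ N) a b)
    (π : S → ℝ) (hπ1 : ∑ a, π a = 1) (hπs : ∀ b, ∑ a, π a * M a b = π b)
    (μ : S → ℝ) (hμ1 : ∑ a, μ a = 1) (hμs : ∀ b, ∑ a, μ a * M a b = μ b) : μ = π := by
  set e : S → ℝ := fun x => μ x - π x with he
  have hesum : ∑ x, e x = 0 := by
    simp only [he, Finset.sum_sub_distrib, hμ1, hπ1, sub_self]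
  have hestat : ∀ y, ∑ x, e x * (M ^ N) x y = e y := by
    intro y
    simp only [he, sub_mul]
    rw [Finset.sum_sub_distrib, stat_pow_aux M μ hμs, stat_pow_aux M π hπs]
  have hrowN : ∀ a, ∑ b, (M ^ N) a b = 1 := row_sum_pow_aux M hrow N
  have hcard : (0 : ℝ) < Fintype.card S := by
    exact_mod_cast Fintype.card_pos
  have hr1 : (Fintype.card S : ℝ) * δ ≤ 1 := by
    have := hrowN (Classical.arbitrary S)
    calc (Fintype.card S : ℝ) * δ = ∑ _b : S, δ := by
          rw [Finset.sum_const, Finset.card_univ, nsmul_eq_mul]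
      _ ≤ ∑ b, (M ^ N) (Classical.arbitrary S) b :=
          Finset.sum_le_sum fun b _ => hMN _ b
      _ = 1 := this
  have key := contract'_aux (M ^ N) hrowN δ hMN e hesum
  rw [Finset.sum_congr rfl fun y _ => congrArg abs (hestat y)] at key
  have habs : ∑ y, |e y| = 0 := by
    have hnn : 0 ≤ ∑ y, |e y| := Finset.sum_nonneg fun y _ => abs_nonneg _
    nlinarith [mul_pos hcard hδ]
  funext x
  have := (Finset.sum_eq_zero_iff_of_nonneg fun y _ => abs_nonneg (e y)).mp habs x (Finset.mem_univ x)
  have : e x = 0 := abs_eq_zero.mp this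
  simpa [he, sub_eq_zero] using this

lemma nat_div_tendsto (N : ℕ) (hN : 0 < N) :
    Tendsto (fun m : ℕ => m / N) atTop atTop := by
  refine tendsto_atTop_atTop.mpr fun b => ⟨b * N, fun a ha => ?_⟩
  exact (Nat.le_div_iff_mul_le hN).mpr ha

lemma markov_converge_aux (M : Matrix S S ℝ) (hnn : ∀ a b, 0 ≤ M a b)
    (hrow : ∀ a, ∑ b, M a b = 1)
    (N : ℕ) (hN : 0 < N) (δ : ℝ) (hδ : 0 < δ) (hMN : ∀ a b, δ ≤ (M ^ N) a b)
    (π : S → ℝ) (hπ1 : ∑ a, π a = 1) (hπs : ∀ b, ∑ a, π a * M a b = π b) :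
    ∀ a b, Tendsto (fun m : ℕ => (M ^ m) a b) atTop (nhds (π b)) := by
  intro a b
  set r : ℝ := 1 - (Fintype.card S : ℝ) * δ with hrdef
  have hcard : (0 : ℝ) < Fintype.card S := by exact_mod_cast Fintype.card_pos
  have hrowN : ∀ x, ∑ y, (M ^ N) x y = 1 := row_sum_pow_aux M hrow N
  have hr1 : (Fintype.card S : ℝ) * δ ≤ 1 := by
    calc (Fintype.card S : ℝ) * δ = ∑ _y : S, δ := by
          rw [Finset.sum_const, Finset.card_univ, nsmul_eq_mul]
      _ ≤ ∑ y, (M ^ N) (Classical.arbitrary S) y :=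
          Finset.sum_le_sum fun y _ => hMN _ y
      _ = 1 := hrowN _
  have hr0 : 0 ≤ r := by simp [hrdef]; linarith
  have hrlt : r < 1 := by
    have : 0 < (Fintype.card S : ℝ) * δ := mul_pos hcard hδ
    simp [hrdef]; linarith
  set D : ℕ → ℝ := fun m => ∑ y, |(M ^ m) a y - π y| with hD
  have hesum : ∀ m, ∑ x, ((M ^ m) a x - π x) = 0 := by
    intro m
    rw [Finset.sum_sub_distrib, row_sum_pow_aux M hrow m a, hπ1, sub_self]
  have hstep : ∀ m, ∀ y, ∑ x, ((M ^ m) a x - π x) * M x y = (M ^ (m + 1)) a y - π y := by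
    intro m y
    simp only [sub_mul]
    rw [Finset.sum_sub_distrib, hπs y, pow_succ, Matrix.mul_apply]
  have hstepN : ∀ m, ∀ y, ∑ x, ((M ^ m) a x - π x) * (M ^ N) x y = (M ^ (m + N)) a y - π y := by
    intro m y
    simp only [sub_mul]
    rw [Finset.sum_sub_distrib, stat_pow_aux M π hπs N y, pow_add, Matrix.mul_apply]
  have hmono : ∀ m, D (m + 1) ≤ D m := by
    intro m
    have := contract_aux M hnn hrow (fun x => (M ^ m) a x - π x)
    rw [Finset.sum_congr rfl fun y _ => congrArg abs (hstep m y)] at this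
    exact this
  have hmono' : ∀ m k, D (m + k) ≤ D m := by
    intro m k
    induction k with
    | zero => simp
    | succ k ih => calc D (m + (k + 1)) = D ((m + k) + 1) := by ring_nf
                     _ ≤ D (m + k) := hmono _
                     _ ≤ D m := ih
  have hcontr : ∀ m, D (m + N) ≤ r * D m := by
    intro m
    have := contract'_aux (M ^ N) hrowN δ hMN (fun x => (M ^ m) a x - π x) (hesum m)
    rw [Finset.sum_congr rfl fun y _ => congrArg abs (hstepN m y)] at this
    exact this
  have hDnn : ∀ m, 0 ≤ D m := fun m => Finset.sum_nonneg fun y _ => abs_nonneg _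
  have hbound : ∀ m, D m ≤ D 0 * r ^ (m / N) := by
    intro m
    induction m using Nat.strong_induction_on with
    | _ m ih =>
      rcases lt_or_ge m N with hm | hm
      · rw [Nat.div_eq_of_lt hm, pow_zero, mul_one]
        simpa using hmono' 0 m
      · have hm' : m - N < m := Nat.sub_lt (lt_of_lt_of_le hN hm) hN
        have h1 : D m ≤ r * D (m - N) := by
          have := hcontr (m - N)
          rwa [Nat.sub_add_cancel hm] at this
        have h2 := ih (m - N) hm'
        have hdiv : (m - N) / N + 1 = m / N := (Nat.div_eq_sub_div hN hm).symm
        calc D m ≤ r * D (m - N) := h1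
          _ ≤ r * (D 0 * r ^ ((m - N) / N)) := by
              exact mul_le_mul_of_nonneg_left h2 hr0
          _ = D 0 * r ^ ((m - N) / N + 1) := by ring
          _ = D 0 * r ^ (m / N) := by rw [hdiv]
  have hrt : Tendsto (fun m : ℕ => D 0 * r ^ (m / N)) atTop (nhds 0) := by
    have h1 : Tendsto (fun k : ℕ => r ^ k) atTop (nhds 0) :=
      tendsto_pow_atTop_nhds_zero_of_lt_one hr0 hrlt
    have h2 := h1.comp (nat_div_tendsto N hN)
    have := h2.const_mul (D 0)
    simpa using this
  have hDlim : Tendsto D atTop (nhds 0) := by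
    refine squeeze_zero hDnn hbound hrt
  have habs : Tendsto (fun m => |(M ^ m) a b - π b|) atTop (nhds 0) := by
    refine squeeze_zero (fun m => abs_nonneg _) (fun m => ?_) hDlim
    exact Finset.single_le_sum (f := fun y => |(M ^ m) a y - π y|)
      (fun y _ => abs_nonneg _) (Finset.mem_univ b)
  rw [tendsto_iff_dist_tendsto_zero]
  simpa [Real.dist_eq] using habs

end markov

/-! ### Auxiliary lemmas about the logistic function and `setLink` -/

lemma one_add_exp_pos (u : ℝ) : (0:ℝ) < 1 + Real.exp u := by positivity

lemma Lgc_pos (u : ℝ) : 0 < Lgc u := div_pos (Real.exp_pos u) (one_add_exp_pos u)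

lemma Lgc_lt_one (u : ℝ) : Lgc u < 1 := by
  rw [Lgc, div_lt_one (one_add_exp_pos u)]
  linarith

lemma Lgc_balance (a b : ℝ) :
    Real.exp b * Lgc (a - b) = Real.exp a * (1 - Lgc (a - b)) := by
  have h : (0:ℝ) < 1 + Real.exp (a - b) := one_add_exp_pos _
  have he : Real.exp b * Real.exp (a - b) = Real.exp a := by
    rw [← Real.exp_add]; ring_nf
  rw [Lgc]
  field_simp
  linarith [he]

lemma net_ext {n : ℕ} (g h : Net n) (H : ∀ i j : Fin n, i < j → g.1 i j = h.1 i j) :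
    g = h := by
  apply Subtype.ext
  funext a b
  rcases lt_trichotomy a b with hab | hab | hab
  · exact H a b hab
  · subst hab; rw [g.2.2, h.2.2]
  · rw [g.2.1, h.2.1]; exact H b a hab

lemma setLink_apply {n : ℕ} (g : Net n) (i j : Fin n) (d : Bool) (hij : i ≠ j) :
    (setLink g i j d).1 i j = d := by
  simp [setLink, hij]

lemma setLink_apply_other {n : ℕ} (g : Net n) (i j a b : Fin n) (d : Bool)
    (hab : a ≠ b) (h : ¬((a = i ∧ b = j) ∨ (a = j ∧ b = i))) :
    (setLink g i j d).1 a b = g.1 a b := by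
  simp [setLink, hab, h]

lemma setLink_ne {n : ℕ} (g g' : Net n) (i j : Fin n) (hij : i ≠ j) :
    setLink g i j true ≠ setLink g' i j false := by
  intro h
  have := congrArg (fun x : Net n => x.1 i j) h
  rw [setLink_apply g i j true hij, setLink_apply g' i j false hij] at this
  exact Bool.noConfusion this

lemma setLink_self {n : ℕ} (g : Net n) (i j : Fin n) :
    setLink g i j (g.1 i j) = g := by
  apply Subtype.ext
  funext a b
  simp only [setLink]
  by_cases hab : a = b
  · rw [if_pos hab]; subst hab; exact (g.2.2 a).symm
  · rw [if_neg hab]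
    by_cases h : (a = i ∧ b = j) ∨ (a = j ∧ b = i)
    · rw [if_pos h]
      rcases h with ⟨ha, hb⟩ | ⟨ha, hb⟩
      · subst ha; subst hb; rfl
      · subst ha; subst hb; exact (g.2.1 a b).symm
    · rw [if_neg h]

lemma setLink_setLink {n : ℕ} (g : Net n) (i j : Fin n) (d d' : Bool) :
    setLink (setLink g i j d) i j d' = setLink g i j d' := by
  apply Subtype.ext
  funext a b
  simp only [setLink]
  by_cases hab : a = b
  · simp [hab]
  · by_cases h : (a = i ∧ b = j) ∨ (a = j ∧ b = i) <;> simp [hab, h]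

lemma self_mem_setLink {n : ℕ} (g : Net n) (i j : Fin n) :
    g = setLink g i j true ∨ g = setLink g i j false := by
  cases h : g.1 i j with
  | true => left; rw [← h, setLink_self]
  | false => right; rw [← h, setLink_self]

/-- Apply a list of pairs, setting each link to the value in `t`. -/
def applyPairs {n : ℕ} (t : Net n) : Net n → List (NPair n) → Net n
  | g, [] => g
  | g, p :: l => applyPairs t (setLink g p.1.1 p.1.2 (t.1 p.1.1 p.1.2)) l

lemma applyPairs_agree {n : ℕ} (t : Net n) (l : List (NPair n)) :
    ∀ (g : Net n) (q : NPair n),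
      (q ∈ l ∨ g.1 q.1.1 q.1.2 = t.1 q.1.1 q.1.2) →
      (applyPairs t g l).1 q.1.1 q.1.2 = t.1 q.1.1 q.1.2 := by
  induction l with
  | nil =>
    intro g q h
    rcases h with h | h
    · exact absurd h List.not_mem_nil
    · exact h
  | cons p l ih =>
    intro g q h
    show (applyPairs t (setLink g p.1.1 p.1.2 (t.1 p.1.1 p.1.2)) l).1 q.1.1 q.1.2 = _
    by_cases hqp : q = p
    · subst hqp
      refine ih _ q (Or.inr ?_)
      exact setLink_apply g q.1.1 q.1.2 _ (ne_of_lt q.2)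
    · rcases h with h | h
      · rcases List.mem_cons.mp h with h' | h'
        · exact absurd h' hqp
        · exact ih _ q (Or.inl h')
      · refine ih _ q (Or.inr ?_)
        rw [setLink_apply_other]
        · exact h
        · exact ne_of_lt q.2
        · rintro (⟨h1, h2⟩ | ⟨h1, h2⟩)
          · exact hqp (Subtype.ext (Prod.ext h1 h2))
          · have := q.2
            rw [h1, h2] at this
            exact absurd p.2 (not_lt_of_gt this)

lemma applyPairs_eq {n : ℕ} (t g : Net n) :
    applyPairs t g (Finset.univ.toList) = t := by
  apply net_ext
  intro i j hij
  exact applyPairs_agree t _ g ⟨(i, j), hij⟩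
    (Or.inl (Finset.mem_toList.mpr (Finset.mem_univ _)))

/-- the network-formation chain with positive meeting probabilities and logistic
link updates is irreducible and aperiodic on the finite state space, hence converges to its
unique stationary distribution `π ∝ exp Q` from any initial network. -/
theorem chain_irreducible_aperiodic_converges
    (n : ℕ) (Q : Net n → ℝ)
    (ρ : Net n → NPair n → ℝ)
    (hρpos : ∀ g p, 0 < ρ g p)
    (hρsum : ∀ g, ∑ p : NPair n, ρ g p = 1)
    (hρinv : ∀ (g : Net n) (p : NPair n) (d : Bool),
      ρ (setLink g p.1.1 p.1.2 d) p = ρ g p)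
    (P : Matrix (Net n) (Net n) ℝ)
    (hP : ∀ g g', P g g' = ∑ p : NPair n,
      ρ g p *
        ((if g' = setLink g p.1.1 p.1.2 true
            then Lgc (Q (setLink g p.1.1 p.1.2 true) - Q (setLink g p.1.1 p.1.2 false)) else 0)
          + (if g' = setLink g p.1.1 p.1.2 false
            then 1 - Lgc (Q (setLink g p.1.1 p.1.2 true) - Q (setLink g p.1.1 p.1.2 false))
            else 0)))
    (π : Net n → ℝ)
    (hπ : ∀ g, π g = Real.exp (Q g) / ∑ ω : Net n, Real.exp (Q ω)) :
    (∀ g g' : Net n, ∃ m : ℕ, 0 < m ∧ 0 < (P ^ m) g g') ∧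
    (∀ g : Net n, 0 < P g g) ∧
    (∀ g g' : Net n, Tendsto (fun m : ℕ => (P ^ m) g g') atTop (nhds (π g'))) ∧
    (∀ μ : Net n → ℝ, (∀ g, 0 ≤ μ g) → (∑ g : Net n, μ g = 1) →
      (∀ g', ∑ g : Net n, μ g * P g g' = μ g') → μ = π) := by
  -- the empty network
  have g0 : Net n := ⟨fun _ _ => false, ⟨fun _ _ => rfl, fun _ => rfl⟩⟩
  haveI : Nonempty (Net n) := ⟨g0⟩
  set N := Fintype.card (NPair n) with hNdef
  have hNpos : 0 < N := by
    rcases Nat.eq_zero_or_pos N with hN0 | hN0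
    · exfalso
      haveI : IsEmpty (NPair n) := Fintype.card_eq_zero_iff.mp hN0
      have := hρsum g0
      simp at this
    · exact hN0
  haveI : Nonempty (NPair n) := Fintype.card_pos_iff.mp hNpos
  -- nonnegativity of P
  have hPnn : ∀ g g', 0 ≤ P g g' := by
    intro g g'
    rw [hP]
    refine Finset.sum_nonneg fun p _ => mul_nonneg (le_of_lt (hρpos g p)) (add_nonneg ?_ ?_)
    · split
      · exact le_of_lt (Lgc_pos _)
      · exact le_rfl
    · split
      · linarith [Lgc_lt_one (Q (setLink g p.1.1 p.1.2 true) - Q (setLink g p.1.1 p.1.2 false))]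
      · exact le_rfl
  -- row sums of P
  have hProw : ∀ g, ∑ g' : Net n, P g g' = 1 := by
    intro g
    simp only [hP]
    rw [Finset.sum_comm]
    have hterm : ∀ p : NPair n, (∑ g' : Net n,
        ρ g p *
          ((if g' = setLink g p.1.1 p.1.2 true
              then Lgc (Q (setLink g p.1.1 p.1.2 true) - Q (setLink g p.1.1 p.1.2 false)) else 0)
            + (if g' = setLink g p.1.1 p.1.2 false
              then 1 - Lgc (Q (setLink g p.1.1 p.1.2 true) - Q (setLink g p.1.1 p.1.2 false))
              else 0))) = ρ g p := by
      intro p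
      rw [← Finset.mul_sum, Finset.sum_add_distrib, Finset.sum_ite_eq', Finset.sum_ite_eq']
      simp only [Finset.mem_univ, if_true]
      ring
    rw [Finset.sum_congr rfl fun p _ => hterm p]
    exact hρsum g
  -- single-flip transitions have positive probability
  have hPflip : ∀ (g : Net n) (p : NPair n) (d : Bool),
      0 < P g (setLink g p.1.1 p.1.2 d) := by
    intro g p d
    have hij : p.1.1 ≠ p.1.2 := ne_of_lt p.2
    rw [hP]
    refine Finset.sum_pos'
      (fun q _ => mul_nonneg (le_of_lt (hρpos g q)) (add_nonneg ?_ ?_))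
      ⟨p, Finset.mem_univ p, ?_⟩
    · split
      · exact le_of_lt (Lgc_pos _)
      · exact le_rfl
    · split
      · linarith [Lgc_lt_one (Q (setLink g q.1.1 q.1.2 true) - Q (setLink g q.1.1 q.1.2 false))]
      · exact le_rfl
    · cases d with
      | true =>
        rw [if_pos rfl, if_neg (setLink_ne g g p.1.1 p.1.2 hij)]
        have := Lgc_pos (Q (setLink g p.1.1 p.1.2 true) - Q (setLink g p.1.1 p.1.2 false))
        have := hρpos g p
        nlinarith
      | false =>
        rw [if_pos rfl, if_neg fun h => setLink_ne g g p.1.1 p.1.2 hij h.symm]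
        have := Lgc_lt_one (Q (setLink g p.1.1 p.1.2 true) - Q (setLink g p.1.1 p.1.2 false))
        have := hρpos g p
        nlinarith
  -- positive diagonal
  have hPdiag : ∀ g, 0 < P g g := by
    intro g
    obtain ⟨p⟩ := (inferInstance : Nonempty (NPair n))
    have := hPflip g p (g.1 p.1.1 p.1.2)
    rwa [setLink_self] at this
  -- detailed balance
  have db : ∀ g g', Real.exp (Q g) * P g g' = Real.exp (Q g') * P g' g := by
    intro g g'
    rw [hP, hP, Finset.mul_sum, Finset.mul_sum]
    refine Finset.sum_congr rfl fun p _ => ?_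
    have hij : p.1.1 ≠ p.1.2 := ne_of_lt p.2
    by_cases hA : g' = setLink g p.1.1 p.1.2 true
    · rcases self_mem_setLink g p.1.1 p.1.2 with hg | hg
      · rw [hA, ← hg, ← hg]
      · -- g = setLink g p.1.1 p.1.2 false
        have hL : ∀ d, setLink g' p.1.1 p.1.2 d = setLink g p.1.1 p.1.2 d := by
          intro d; rw [hA, setLink_setLink]
        have hgA : ¬ g = setLink g p.1.1 p.1.2 true := fun h =>
          setLink_ne g g p.1.1 p.1.2 hij (h.symm.trans hg)
        have hB' : ¬ g' = setLink g p.1.1 p.1.2 false := fun h =>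
          setLink_ne g g p.1.1 p.1.2 hij (hA.symm.trans h)
        rw [if_pos hA, if_neg hB', hL true, hL false, if_neg hgA, if_pos hg, hA,
          hρinv g p true]
        rw [← hg]
        linear_combination (ρ g p) *
          Lgc_balance (Q (setLink g p.1.1 p.1.2 true)) (Q g)
    · by_cases hB : g' = setLink g p.1.1 p.1.2 false
      · rcases self_mem_setLink g p.1.1 p.1.2 with hg | hg
        · -- g = setLink g p.1.1 p.1.2 true
          have hL : ∀ d, setLink g' p.1.1 p.1.2 d = setLink g p.1.1 p.1.2 d := by
            intro d; rw [hB, setLink_setLink]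
          have hgB : ¬ g = setLink g p.1.1 p.1.2 false := fun h =>
            setLink_ne g g p.1.1 p.1.2 hij (hg.symm.trans h)
          rw [if_neg hA, if_pos hB, hL true, hL false, if_pos hg, if_neg hgB, hB,
            hρinv g p false]
          rw [← hg]
          linear_combination (- ρ g p) *
            Lgc_balance (Q g) (Q (setLink g p.1.1 p.1.2 false))
        · rw [hB, ← hg, ← hg]
      · -- g' differs from g at more than the pair p
        have h1 : ¬ g = setLink g' p.1.1 p.1.2 true := by
          intro h
          have hd : ∀ d, setLink g' p.1.1 p.1.2 d = setLink g p.1.1 p.1.2 d := fun d => by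
            rw [h, setLink_setLink]
          rcases self_mem_setLink g' p.1.1 p.1.2 with h' | h'
          · exact hA (h'.trans (hd true))
          · exact hB (h'.trans (hd false))
        have h2 : ¬ g = setLink g' p.1.1 p.1.2 false := by
          intro h
          have hd : ∀ d, setLink g' p.1.1 p.1.2 d = setLink g p.1.1 p.1.2 d := fun d => by
            rw [h, setLink_setLink]
          rcases self_mem_setLink g' p.1.1 p.1.2 with h' | h'
          · exact hA (h'.trans (hd true))
          · exact hB (h'.trans (hd false))
        rw [if_neg hA, if_neg hB, if_neg h1, if_neg h2]
        ring
  -- the normalizing constant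
  have hZpos : 0 < ∑ ω : Net n, Real.exp (Q ω) :=
    Finset.sum_pos (fun ω _ => Real.exp_pos (Q ω)) Finset.univ_nonempty
  have hπ1 : ∑ g : Net n, π g = 1 := by
    simp only [hπ]
    rw [← Finset.sum_div, div_self (ne_of_gt hZpos)]
  have hπs : ∀ g', ∑ g : Net n, π g * P g g' = π g' := by
    intro g'
    have hterm : ∀ g : Net n, π g * P g g' =
        Real.exp (Q g') * P g' g / ∑ ω : Net n, Real.exp (Q ω) := by
      intro g
      rw [hπ g, div_mul_eq_mul_div, db g g']
    rw [Finset.sum_congr rfl fun g _ => hterm g, ← Finset.sum_div, ← Finset.mul_sum,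
      hProw g', mul_one, ← hπ g']
  -- positivity of N-step transitions
  have hpathpos : ∀ (t : Net n) (l : List (NPair n)) (g : Net n),
      0 < (P ^ l.length) g (applyPairs t g l) := by
    intro t l
    induction l with
    | nil =>
      intro g
      simp [applyPairs, Matrix.one_apply_eq]
    | cons p l ih =>
      intro g
      exact step_pos_aux P hPnn l.length g _ _ (hPflip g p _) (ih _)
  have hpow : ∀ g g' : Net n, 0 < (P ^ N) g g' := by
    intro g g'
    have := hpathpos g' Finset.univ.toList g
    rw [applyPairs_eq, Finset.length_toList, Finset.card_univ] at this
    exact this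
  -- uniform lower bound
  obtain ⟨q, -, hq⟩ := Finset.exists_min_image (Finset.univ : Finset (Net n × Net n))
    (fun q => (P ^ N) q.1 q.2) ⟨(g0, g0), Finset.mem_univ _⟩
  have hδpos : 0 < (P ^ N) q.1 q.2 := hpow q.1 q.2
  have hMN : ∀ a b : Net n, (P ^ N) q.1 q.2 ≤ (P ^ N) a b := fun a b =>
    hq (a, b) (Finset.mem_univ _)
  refine ⟨fun g g' => ⟨N, hNpos, hpow g g'⟩, hPdiag, ?_, ?_⟩
  · exact markov_converge_aux P hPnn hProw N hNpos _ hδpos hMN π hπ1 hπs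
  · intro μ _ hμ1 hμs
    exact markov_unique_aux P hProw N _ hδpos hMN π hπ1 hπs μ hμ1 hμs
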